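/- arXiv:2309.14326 — 2 statements merged into one kernel-verified Lean document; each statement's English description precedes it below -/
import Mathlib

section
/- There does not exist a family of 2^n + 1 subsets S_1, ..., S_{2^n+1} of the non-identity n-qubit Pauli matrices, each of size 2^n − 1 with I + ∑_{P∈S_t} P positive semidefinite, such that the S_t exactly partition all 4^n − 1 non-identity Pauli matrices, for all sufficiently large n. -/
open Matrix
open scoped ComplexOrder

/-- The single-qubit Pauli matrices I, X, Y, Z. -/
noncomputable def pauli : Fin 4 → Matrix (Fin 2) (Fin 2) ℂ :=
  ![(1 : Matrix (Fin 2) (Fin 2) ℂ), !![0, 1; 1, 0],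
    !![0, -Complex.I; Complex.I, 0], !![1, 0; 0, -1]]

/-- The `n`-qubit Pauli matrix indexed by `a : Fin n → Fin 4`. -/
noncomputable def PauliString (n : ℕ) (a : Fin n → Fin 4) :
    Matrix (Fin n → Fin 2) (Fin n → Fin 2) ℂ :=
  Matrix.of fun i j => ∏ k, pauli (a k) (i k) (j k)

/-!
Summing `I + ∑_{P ∈ S_t} P` over a partition gives `2^n I + ∑_a P_a`, and `∑_a P_a = Q^{⊗n}` with
`Q = I + X + Y + Z`, whose eigenvalues are `1 ± √3`. A product eigenvector with one factor for
`1 - √3` and `n - 1` factors for `1 + √3` has eigenvalue `2^n + (1 - √3)(1 + √3)^{n-1}`, which is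
negative for `n ≥ 5`; but a sum of positive semidefinite matrices has no negative eigenvalue.
-/

namespace Matrix

variable {ι m R : Type*} [Fintype ι] [CommSemiring R]

def piKronecker (Q : ι → Matrix m m R) : Matrix (ι → m) (ι → m) R :=
  of fun i j => ∏ k, Q k (i k) (j k)

def piKroneckerVec (u : ι → m → R) : (ι → m) → R :=
  fun i => ∏ k, u k (i k)

theorem piKronecker_one [DecidableEq m] :
    piKronecker (fun _ : ι => (1 : Matrix m m R)) = 1 := by
  ext i j
  by_cases h : i = j
  · subst h
    simp [piKronecker]
  · obtain ⟨k, hk⟩ := Function.ne_iff.mp h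
    rw [one_apply_ne h, piKronecker, of_apply, Finset.prod_eq_zero (Finset.mem_univ k)]
    exact one_apply_ne hk

theorem sum_piKronecker [DecidableEq ι] {κ : Type*} [Fintype κ] (A : ι → κ → Matrix m m R) :
    ∑ a : ι → κ, piKronecker (fun k => A k (a k)) = piKronecker (fun k => ∑ c, A k c) := by
  ext i j
  simp only [piKronecker, sum_apply, of_apply, Fintype.prod_sum]

theorem piKronecker_mulVec_piKroneckerVec [DecidableEq ι] [Fintype m]
    (Q : ι → Matrix m m R) (u : ι → m → R) :
    piKronecker Q *ᵥ piKroneckerVec u = piKroneckerVec fun k => Q k *ᵥ u k := by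
  ext i
  simp only [piKronecker, piKroneckerVec, mulVec, dotProduct, of_apply, Fintype.prod_sum,
    Finset.prod_mul_distrib]

theorem piKroneckerVec_smul (c : ι → R) (u : ι → m → R) :
    piKroneckerVec (fun k => c k • u k) = (∏ k, c k) • piKroneckerVec u := by
  ext i
  simp only [piKroneckerVec, Pi.smul_apply, smul_eq_mul, Finset.prod_mul_distrib]

theorem piKroneckerVec_ne_zero [NoZeroDivisors R] [Nontrivial R] {u : ι → m → R}
    (hu : ∀ k, u k ≠ 0) : piKroneckerVec u ≠ 0 := by
  choose i hi using fun k => Function.ne_iff.mp (hu k)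
  exact Function.ne_iff.mpr ⟨i, Finset.prod_ne_zero_iff.mpr fun k _ => hi k⟩

end Matrix

theorem Matrix.PosSemidef.nonneg_of_mulVec_eq_smul {n 𝕜 : Type*} [Fintype n] [RCLike 𝕜]
    {A : Matrix n n 𝕜} (hA : A.PosSemidef) {v : n → 𝕜} (hv : v ≠ 0) {μ : ℝ}
    (h : A *ᵥ v = (μ : 𝕜) • v) : 0 ≤ μ := by
  have hquad := hA.re_dotProduct_nonneg v
  rw [h, dotProduct_smul, smul_eq_mul, RCLike.re_ofReal_mul] at hquad
  exact nonneg_of_mul_nonneg_left hquad (RCLike.pos_iff.mp (dotProduct_star_self_pos_iff.mpr hv)).1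

theorem sum_sum_eq_sum_of_existsUnique {ι α M : Type*} [Fintype ι] [DecidableEq α]
    [AddCommMonoid M] {S : ι → Finset α} {s : Finset α} (hS : ∀ t, S t ⊆ s)
    (hu : ∀ a ∈ s, ∃! t, a ∈ S t) (f : α → M) :
    ∑ t, ∑ a ∈ S t, f a = ∑ a ∈ s, f a := by
  have hdisj : Set.PairwiseDisjoint (↑(Finset.univ : Finset ι)) S := by
    intro t₁ _ t₂ _ hne
    refine Finset.disjoint_left.mpr fun a ha₁ ha₂ => hne ?_
    exact (hu a (hS t₁ ha₁)).unique ha₁ ha₂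
  have hunion : Finset.univ.biUnion S = s :=
    subset_antisymm (Finset.biUnion_subset.mpr fun t _ => hS t)
      fun a ha => Finset.mem_biUnion.mpr (by simpa using (hu a ha).exists)
  rw [← Finset.sum_biUnion hdisj, hunion]

theorem two_pow_succ_add_lt_zero {m : ℕ} (hm : 4 ≤ m) :
    2 ^ (m + 1) + (1 - √3) * (1 + √3) ^ m < 0 := by
  have h3 : √3 ^ 2 = 3 := Real.sq_sqrt (by norm_num)
  have hlb : 1.73 < √3 := by nlinarith [Real.sqrt_nonneg 3]
  induction m, hm using Nat.le_induction with
  | base =>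
    have hbase : (1 - √3) * (1 + √3) ^ 4 = -20 - 12 * √3 := by
      linear_combination (-√3 ^ 3 - 3 * √3 ^ 2 - 5 * √3 - 7) * h3
    rw [hbase]
    norm_num
    linarith
  | succ m hm ih =>
    have hpos : 0 < (1 + √3) ^ m := by positivity
    calc (2 : ℝ) ^ (m + 1 + 1) + (1 - √3) * (1 + √3) ^ (m + 1)
        = 2 * (2 ^ (m + 1) + (1 - √3) * (1 + √3) ^ m)
          + (1 - √3) * (√3 - 1) * (1 + √3) ^ m := by ring
      _ < 0 := by
        have hneg : (1 - √3) * (√3 - 1) < 0 := by nlinarith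
        nlinarith [mul_neg_of_neg_of_pos hneg hpos]

open Complex in
theorem sum_pauli : ∑ c, pauli c = !![2, 1 - I; 1 + I, 0] := by
  ext i j
  fin_cases i <;> fin_cases j <;> simp [pauli, Fin.sum_univ_four] <;> ring

open Complex in
theorem sum_pauli_mulVec {s : ℂ} (hs : s ^ 2 = 3) :
    (∑ c, pauli c) *ᵥ ![1 - I, s - 1] = (1 + s) • ![1 - I, s - 1] := by
  rw [sum_pauli, mulVec_fin_two, smul_vec2]
  simp only [of_apply, cons_val', cons_val_zero, cons_val_one, cons_val_fin_one, empty_val',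
    smul_eq_mul, vecCons_inj, and_true]
  exact ⟨by ring, by linear_combination -I_sq - hs⟩

theorem pauliString_zero (n : ℕ) : PauliString n (fun _ => 0) = 1 :=
  piKronecker_one

theorem sum_pauliString (n : ℕ) :
    ∑ a, PauliString n a = piKronecker fun _ => ∑ c, pauli c :=
  sum_piKronecker fun _ => pauli

open Complex in
/-- Eigenvectors of `∑ c, pauli c`: the first for `1 - √3`, the others for `1 + √3`. -/
noncomputable def pauliSumEigvec (m : ℕ) : Fin (m + 1) → Fin 2 → ℂ :=
  Fin.cons ![1 - I, -√3 - 1] fun _ => ![1 - I, √3 - 1]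

theorem sum_pauliString_mulVec_eigvec (m : ℕ) :
    (∑ a, PauliString (m + 1) a) *ᵥ piKroneckerVec (pauliSumEigvec m)
      = (((1 - √3) * (1 + √3) ^ m : ℝ) : ℂ) • piKroneckerVec (pauliSumEigvec m) := by
  have h3 : ((√3 : ℝ) : ℂ) ^ 2 = 3 := by
    rw [← Complex.ofReal_pow, Real.sq_sqrt (by norm_num)]
    norm_num
  have hQ : ∀ k, (∑ c, pauli c) *ᵥ pauliSumEigvec m k
      = (Fin.cons (1 - √3 : ℂ) fun _ => 1 + √3 : Fin (m + 1) → ℂ) k • pauliSumEigvec m k := by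
    refine Fin.cases ?_ fun k => ?_
    · simp only [pauliSumEigvec, Fin.cons_zero]
      rw [sub_eq_add_neg (1 : ℂ) (√3 : ℂ)]
      exact sum_pauli_mulVec (by rw [neg_sq, h3])
    · simp only [pauliSumEigvec, Fin.cons_succ]
      exact sum_pauli_mulVec h3
  rw [sum_pauliString, piKronecker_mulVec_piKroneckerVec, funext hQ, piKroneckerVec_smul,
    Fin.prod_univ_succ]
  push_cast
  simp

theorem pauliSumEigvec_ne_zero (m : ℕ) (k : Fin (m + 1)) : pauliSumEigvec m k ≠ 0 := by
  refine Function.ne_iff.mpr ⟨0, ?_⟩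
  refine Fin.cases ?_ (fun _ => ?_) k <;> simp [pauliSumEigvec, sub_eq_zero, Complex.ext_iff]

theorem sum_one_add_sum_pauliString_of_partition {n k : ℕ}
    {S : Fin (k + 1) → Finset (Fin n → Fin 4)} (h0 : ∀ t, (fun _ => 0) ∉ S t)
    (huniq : ∀ a : Fin n → Fin 4, a ≠ (fun _ => 0) → ∃! t, a ∈ S t) :
    ∑ t, (1 + ∑ a ∈ S t, PauliString n a) = (k : ℂ) • 1 + ∑ a, PauliString n a := by
  have hpart : ∑ t, ∑ a ∈ S t, PauliString n a
      = ∑ a ∈ Finset.univ.erase (fun _ => 0), PauliString n a :=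
    sum_sum_eq_sum_of_existsUnique
      (fun t a ha => Finset.mem_erase.mpr ⟨ne_of_mem_of_not_mem ha (h0 t), Finset.mem_univ a⟩)
      (fun a ha => huniq a (Finset.ne_of_mem_erase ha)) _
  rw [Finset.sum_add_distrib, hpart, ← Finset.add_sum_erase _ (PauliString n) (Finset.mem_univ _),
    pauliString_zero, Finset.sum_const, Finset.card_univ, Fintype.card_fin, succ_nsmul,
    ← add_assoc, Nat.cast_smul_eq_nsmul]

/-- For all sufficiently large `n`, there is no family of `2^n + 1` sets of
non-identity `n`-qubit Pauli matrices, each of size `2^n − 1` with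
`I + ∑_{P∈S_t} P` positive semidefinite, exactly partitioning all `4^n − 1`
non-identity Pauli matrices. -/
theorem no_exact_pauli_partition :
    ∃ N : ℕ, ∀ n ≥ N,
      ¬ ∃ S : Fin (2 ^ n + 1) → Finset (Fin n → Fin 4),
          (∀ t, (S t).card = 2 ^ n - 1) ∧
          (∀ t, (fun _ => (0 : Fin 4)) ∉ S t) ∧
          (∀ t, ((1 : Matrix (Fin n → Fin 2) (Fin n → Fin 2) ℂ)
              + ∑ a ∈ S t, PauliString n a).PosSemidef) ∧
          (∀ a : Fin n → Fin 4, a ≠ (fun _ => 0) → ∃! t, a ∈ S t) := by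
  refine ⟨5, fun n hn => ?_⟩
  rintro ⟨S, -, h0, hpsd, huniq⟩
  obtain ⟨m, rfl⟩ : ∃ m, n = m + 1 := ⟨n - 1, by omega⟩
  set μ : ℝ := 2 ^ (m + 1) + (1 - √3) * (1 + √3) ^ m
  have heig : (∑ t, (1 + ∑ a ∈ S t, PauliString (m + 1) a)) *ᵥ piKroneckerVec (pauliSumEigvec m)
      = (μ : ℂ) • piKroneckerVec (pauliSumEigvec m) := by
    rw [sum_one_add_sum_pauliString_of_partition h0 huniq, add_mulVec,
      sum_pauliString_mulVec_eigvec, smul_mulVec, one_mulVec, ← add_smul]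
    push_cast [μ]
    rfl
  have hμ : 0 ≤ μ := (posSemidef_sum _ fun t _ => hpsd t).nonneg_of_mulVec_eq_smul
    (piKroneckerVec_ne_zero (pauliSumEigvec_ne_zero m)) heig
  linarith [two_pow_succ_add_lt_zero (m := m) (by omega)]
end

section
/- For any 2^n × 2^n complex matrix C of rank at most 2^k with C ≠ 0, the sum over all 4^n − 1 non-identity n-qubit Pauli matrices P_a of (Tr(P_a C† P_a C) / Tr(C† C))² is at most 2^{n+k}. -/
/-!
Write `A = P C† P C` for a Pauli string `P`. Its trace is real and `rank A ≤ rank C ≤ 2^k`. With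
`Q` the orthogonal projection onto the range of `A` we have `Tr A = Tr (Q† A)`, so Cauchy–Schwarz
for the Hilbert–Schmidt inner product gives `(Tr A)² ≤ Tr Q · Tr (A† A) = rank A · Tr (A† A)`.
Since `P² = 1`, `Tr (A† A) = Tr (M P M P)` with `M = C C†`, and the Pauli twirl
`∑ₐ Pₐ M Pₐ = 2ⁿ Tr M · 1` turns the sum of these over all `a` into `2ⁿ Tr (C† C)²`.
-/

open Matrix
open scoped ComplexOrder

open scoped InnerProductSpace

theorem star_inner_mul_inner_le {𝕜 E : Type*} [RCLike 𝕜] [NormedAddCommGroup E]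
    [InnerProductSpace 𝕜 E] (x y : E) : star ⟪x, y⟫_𝕜 * ⟪x, y⟫_𝕜 ≤ ⟪x, x⟫_𝕜 * ⟪y, y⟫_𝕜 := by
  rw [RCLike.star_def, RCLike.conj_mul, inner_self_eq_norm_sq_to_K, inner_self_eq_norm_sq_to_K,
    ← RCLike.ofReal_pow, ← RCLike.ofReal_pow, ← RCLike.ofReal_pow, ← RCLike.ofReal_mul,
    RCLike.ofReal_le_ofReal, ← mul_pow]
  exact pow_le_pow_left₀ (norm_nonneg _) (norm_inner_le_norm x y) 2

namespace Matrix

section Trace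

variable {ι R 𝕜 : Type*} [Fintype ι]

theorem IsHermitian.star_trace_mul_conjTranspose_mul_mul [CommSemiring R] [StarRing R]
    {P : Matrix ι ι R} (hP : P.IsHermitian) (C : Matrix ι ι R) :
    star (P * Cᴴ * P * C).trace = (P * Cᴴ * P * C).trace := by
  have h : (P * Cᴴ * P * C)ᴴ = Cᴴ * P * C * P := by
    simp only [conjTranspose_mul, conjTranspose_conjTranspose, hP.eq, Matrix.mul_assoc]
  rw [← trace_conjTranspose, h, trace_mul_comm]
  simp only [Matrix.mul_assoc]

theorem IsHermitian.trace_conjTranspose_mul_self_eq_of_mul_self_eq_one [DecidableEq ι]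
    [CommSemiring R] [StarRing R] {P : Matrix ι ι R} (hP : P.IsHermitian) (hPP : P * P = 1)
    (C : Matrix ι ι R) :
    ((P * Cᴴ * P * C)ᴴ * (P * Cᴴ * P * C)).trace = (C * Cᴴ * P * (C * Cᴴ) * P).trace := by
  have h : (P * Cᴴ * P * C)ᴴ * (P * Cᴴ * P * C) = (Cᴴ * P * C * Cᴴ * P) * C := by
    simp only [conjTranspose_mul, conjTranspose_conjTranspose, hP.eq, Matrix.mul_assoc]
    rw [← Matrix.mul_assoc P P, hPP, Matrix.one_mul]
  rw [h, trace_mul_comm]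
  simp only [Matrix.mul_assoc]

variable [RCLike 𝕜]

theorem star_trace_conjTranspose_mul_mul_trace_le (A B : Matrix ι ι 𝕜) :
    star (Bᴴ * A).trace * (Bᴴ * A).trace ≤ (Bᴴ * B).trace * (Aᴴ * A).trace := by
  simpa only [EuclideanSpace.inner_toLp_toLp, dotProduct_comm _ (star _), star_vec_dotProduct_vec]
    using star_inner_mul_inner_le (𝕜 := 𝕜) (WithLp.toLp 2 B.vec) (WithLp.toLp 2 A.vec)

variable [DecidableEq ι]

theorem exists_isStarProjection_mul_eq_self_and_trace_eq_rank (A : Matrix ι ι 𝕜) :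
    ∃ Q : Matrix ι ι 𝕜, IsStarProjection Q ∧ Q * A = A ∧ Q.trace = A.rank := by
  set K := LinearMap.range (toEuclideanLin A)
  let e := toEuclideanCLM (𝕜 := 𝕜) (n := ι)
  refine ⟨e.symm K.starProjection, ?_, ?_, ?_⟩
  · exact isStarProjection_starProjection.map (F := _ ≃⋆ₐ[𝕜] Matrix ι ι 𝕜) e.symm
  · apply EquivLike.injective e
    rw [map_mul, StarAlgEquiv.apply_symm_apply]
    ext1 v
    exact K.starProjection_eq_self_iff.mpr (LinearMap.mem_range_self _ v)
  · let b := PiLp.basisFun 2 𝕜 ι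
    have hQ : toLin b b (e.symm K.starProjection) = K.starProjection :=
      congrArg ContinuousLinearMap.toLinearMap (e.apply_symm_apply _)
    have hidem := ContinuousLinearMap.IsIdempotentElem.toLinearMap K.isIdempotentElem_starProjection
    rw [← trace_toLin_eq _ b, hQ, (LinearMap.IsIdempotentElem.isProj_range _ hidem).trace,
      rank_eq_finrank_range_toLin A b b, K.range_starProjection]
    rfl

theorem star_trace_mul_trace_le_rank_mul (A : Matrix ι ι 𝕜) :
    star A.trace * A.trace ≤ A.rank * (Aᴴ * A).trace := by
  obtain ⟨Q, hQ, hQA, hQtr⟩ := exists_isStarProjection_mul_eq_self_and_trace_eq_rank A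
  have hQH : Qᴴ = Q := hQ.isSelfAdjoint
  calc star A.trace * A.trace = star (Qᴴ * A).trace * (Qᴴ * A).trace := by rw [hQH, hQA]
    _ ≤ (Qᴴ * Q).trace * (Aᴴ * A).trace := star_trace_conjTranspose_mul_mul_trace_le A Q
    _ = A.rank * (Aᴴ * A).trace := by rw [hQH, hQ.isIdempotentElem.eq, hQtr]

theorem IsHermitian.sq_trace_mul_conjTranspose_mul_mul_le {P C : Matrix ι ι 𝕜}
    (hP : P.IsHermitian) {r : ℕ} (hC : C.rank ≤ r) :
    (P * Cᴴ * P * C).trace ^ 2 ≤ r * ((P * Cᴴ * P * C)ᴴ * (P * Cᴴ * P * C)).trace := by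
  set A := P * Cᴴ * P * C
  have hrank : (A.rank : 𝕜) ≤ r := Nat.cast_le.mpr ((rank_mul_le_right _ _).trans hC)
  calc A.trace ^ 2 = star A.trace * A.trace := by rw [hP.star_trace_mul_conjTranspose_mul_mul, sq]
    _ ≤ A.rank * (Aᴴ * A).trace := star_trace_mul_trace_le_rank_mul A
    _ ≤ r * (Aᴴ * A).trace :=
      mul_le_mul_of_nonneg_right hrank (posSemidef_conjTranspose_mul_self A).trace_nonneg

end Trace

section PiKron

variable {ι m n p R : Type*} [Fintype ι] [CommSemiring R]

def piKron (A : ι → Matrix m n R) : Matrix (ι → m) (ι → n) R :=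
  of fun i j => ∏ k, A k (i k) (j k)

theorem piKron_mul [DecidableEq ι] [Fintype n] (A : ι → Matrix m n R) (B : ι → Matrix n p R) :
    piKron A * piKron B = piKron fun k => A k * B k := by
  ext i j
  simp only [piKron, mul_apply, of_apply, Fintype.prod_sum, ← Finset.prod_mul_distrib]

theorem piKron_one [DecidableEq m] : piKron (fun _ : ι => (1 : Matrix m m R)) = 1 := by
  ext i j
  simp only [piKron, of_apply, one_apply, Fintype.prod_boole, funext_iff]

theorem piKron_conjTranspose [StarRing R] (A : ι → Matrix m n R) :
    (piKron A)ᴴ = piKron fun k => (A k)ᴴ := by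
  ext i j
  simp [piKron]

end PiKron

end Matrix

theorem pauli_conjTranspose (s : Fin 4) : (pauli s)ᴴ = pauli s := by
  fin_cases s <;> ext i j <;> fin_cases i <;> fin_cases j <;> simp [pauli]

theorem pauli_mul_self (s : Fin 4) : pauli s * pauli s = 1 := by
  fin_cases s <;> simp [pauli, one_fin_two]

theorem sum_pauli_apply_mul_pauli_apply (x y j i : Fin 2) :
    ∑ s, pauli s x y * pauli s j i = if x = i ∧ y = j then 2 else 0 := by
  fin_cases x <;> fin_cases y <;> fin_cases j <;> fin_cases i <;>
    simp [Fin.sum_univ_four, pauli] <;> norm_num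

section PauliString

variable (n : ℕ)

theorem pauliString_eq_piKron (a : Fin n → Fin 4) :
    PauliString n a = piKron fun k => pauli (a k) :=
  rfl

theorem isHermitian_pauliString (a : Fin n → Fin 4) : (PauliString n a).IsHermitian := by
  simp only [IsHermitian, pauliString_eq_piKron, piKron_conjTranspose, pauli_conjTranspose]

theorem pauliString_mul_self (a : Fin n → Fin 4) : PauliString n a * PauliString n a = 1 := by
  simp only [pauliString_eq_piKron, piKron_mul, pauli_mul_self, piKron_one]

theorem sum_pauliString_apply_mul_apply (x y j i : Fin n → Fin 2) :
    ∑ a, PauliString n a x y * PauliString n a j i = if x = i ∧ y = j then 2 ^ n else 0 := by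
  simp only [PauliString, of_apply, ← Finset.prod_mul_distrib]
  rw [← Fintype.prod_sum fun k s => pauli s (x k) (y k) * pauli s (j k) (i k)]
  simp only [sum_pauli_apply_mul_pauli_apply, Fintype.prod_ite_zero, Finset.prod_const,
    Finset.card_univ, Fintype.card_fin, funext_iff, forall_and]

theorem sum_pauliString_mul_mul_pauliString (M : Matrix (Fin n → Fin 2) (Fin n → Fin 2) ℂ) :
    ∑ a, PauliString n a * M * PauliString n a = (2 ^ n * M.trace) • 1 := by
  ext i j
  calc (∑ a, PauliString n a * M * PauliString n a) i j
      = ∑ y, ∑ x, M x y * ∑ a, PauliString n a i x * PauliString n a y j := by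
        simp only [Matrix.sum_apply, mul_apply, Finset.sum_mul, Finset.mul_sum]
        rw [Finset.sum_comm]
        refine Finset.sum_congr rfl fun y _ => ?_
        rw [Finset.sum_comm]
        exact Finset.sum_congr rfl fun x _ => Finset.sum_congr rfl fun a _ => by ring
    _ = ((2 ^ n * M.trace) • (1 : Matrix (Fin n → Fin 2) (Fin n → Fin 2) ℂ)) i j := by
        simp only [sum_pauliString_apply_mul_apply]
        by_cases h : i = j
        · simp [h, one_apply, trace, Finset.mul_sum, mul_comm]
        · simp [h]

theorem sum_trace_conjTranspose_mul_self_pauliString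
    (C : Matrix (Fin n → Fin 2) (Fin n → Fin 2) ℂ) :
    ∑ a, ((PauliString n a * Cᴴ * PauliString n a * C)ᴴ *
      (PauliString n a * Cᴴ * PauliString n a * C)).trace = 2 ^ n * (Cᴴ * C).trace ^ 2 := by
  calc _ = ∑ a, (C * Cᴴ * (PauliString n a * (C * Cᴴ) * PauliString n a)).trace := by
        refine Finset.sum_congr rfl fun a _ => ?_
        rw [(isHermitian_pauliString n a).trace_conjTranspose_mul_self_eq_of_mul_self_eq_one
          (pauliString_mul_self n a)]
        simp only [Matrix.mul_assoc]
    _ = (C * Cᴴ * ((2 ^ n * (C * Cᴴ).trace) • 1)).trace := by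
        rw [← trace_sum, ← Finset.mul_sum, sum_pauliString_mul_mul_pauliString]
    _ = 2 ^ n * (Cᴴ * C).trace ^ 2 := by
        rw [Matrix.mul_smul, Matrix.mul_one, trace_smul, smul_eq_mul, trace_mul_comm C]
        ring

end PauliString

theorem sum_sq_pauli_twirl_ratio_le_general (n k : ℕ)
    (C : Matrix (Fin n → Fin 2) (Fin n → Fin 2) ℂ)
    (hrank : C.rank ≤ 2 ^ k) :
    ∑ a ∈ Finset.univ.filter (fun a : Fin n → Fin 4 => a ≠ fun _ => 0),
        (Matrix.trace (PauliString n a * Cᴴ * PauliString n a * C)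
          / Matrix.trace (Cᴴ * C)) ^ 2
      ≤ (2 : ℂ) ^ (n + k) := by
  set S := Finset.univ.filter (fun a : Fin n → Fin 4 => a ≠ fun _ => 0)
  set T := (Cᴴ * C).trace
  have hsum : ∑ a ∈ S, (PauliString n a * Cᴴ * PauliString n a * C).trace ^ 2 ≤
      2 ^ (n + k) * T ^ 2 := by
    calc _ ≤ ∑ a ∈ S, 2 ^ k * ((PauliString n a * Cᴴ * PauliString n a * C)ᴴ *
          (PauliString n a * Cᴴ * PauliString n a * C)).trace :=
          Finset.sum_le_sum fun a _ => by
            exact_mod_cast (isHermitian_pauliString n a).sq_trace_mul_conjTranspose_mul_mul_le hrank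
      _ ≤ ∑ a, 2 ^ k * ((PauliString n a * Cᴴ * PauliString n a * C)ᴴ *
          (PauliString n a * Cᴴ * PauliString n a * C)).trace :=
          Finset.sum_le_sum_of_subset_of_nonneg (Finset.subset_univ S) fun a _ _ =>
            mul_nonneg (pow_nonneg zero_le_two k) (posSemidef_conjTranspose_mul_self _).trace_nonneg
      _ = 2 ^ (n + k) * T ^ 2 := by
        rw [← Finset.mul_sum, sum_trace_conjTranspose_mul_self_pauliString, pow_add]
        ring
  -- `T = 0` makes every ratio a division by zero, hence `0`.
  obtain hT | hT := eq_or_ne T 0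
  · simp [hT]
  have hT2 : 0 < T ^ 2 :=
    pow_pos (lt_of_le_of_ne (posSemidef_conjTranspose_mul_self C).trace_nonneg hT.symm) 2
  simp only [div_pow, ← Finset.sum_div]
  exact div_le_of_le_mul₀ hT2.le (pow_nonneg zero_le_two _) hsum

/-- For any nonzero `2^n × 2^n` matrix `C` of rank at most `2^k`,
`∑_{a ≠ 0} (Tr(P_a C† P_a C)/Tr(C† C))² ≤ 2^{n+k}`. -/
theorem sum_sq_pauli_twirl_ratio_le (n k : ℕ)
    (C : Matrix (Fin n → Fin 2) (Fin n → Fin 2) ℂ)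
    (hrank : C.rank ≤ 2 ^ k) (hC : C ≠ 0) :
    ∑ a ∈ Finset.univ.filter (fun a : Fin n → Fin 4 => a ≠ fun _ => 0),
        (Matrix.trace (PauliString n a * Cᴴ * PauliString n a * C)
          / Matrix.trace (Cᴴ * C)) ^ 2
      ≤ (2 : ℂ) ^ (n + k) :=
  sum_sq_pauli_twirl_ratio_le_general n k C hrank
end
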